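/- arXiv:1911.06138 — 3 statements merged into one kernel-verified Lean document; each statement's English description precedes it below -/
import Mathlib

section
/- Let Δ ⊆ ℝ⁴ be the convex hull of the five points (6,14,17,65), (1,0,0,0), (0,1,0,0), (0,0,1,0), (0,0,0,1). Then the only lattice points of ℤ⁴ contained in Δ are these five vertices. -/
/-!
With `v = (6, 14, 17, 65)`, so that `∑ vᵢ = 101 + 1`, the simplex is cut out by its facet
inequalities `1 ≤ ∑ xⱼ` and `vᵢ (∑ xⱼ - 1) ≤ 101 xᵢ`. For a lattice point `z` the height
`n = ∑ zⱼ - 1` is therefore an integer in `[0, 101]` with `zᵢ ≥ ⌈vᵢ n / 101⌉`. Height `0` forces a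
unit vector and height `101` forces `z = v`, while for `0 < n < 101` the four ceilings already add
up to more than `n + 1 = ∑ zᵢ`.
-/

open Finset

section FacetInequalities

variable {ι : Type*} [Fintype ι] [DecidableEq ι] {v x : ι → ℝ} {s : ℝ}

theorem one_le_sum_of_mem_convexHull_insert_single (hs : 0 ≤ s) (hv : ∑ j, v j = s + 1)
    (hx : x ∈ convexHull ℝ (insert v (Set.range fun i => Pi.single i 1))) :
    1 ≤ ∑ j, x j := by
  refine convexHull_min ?_ (convex_halfSpace_ge (f := fun y : ι → ℝ => ∑ j, y j) ?_ 1) hx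
  · rintro _ (rfl | ⟨i, rfl⟩)
    · simp only [Set.mem_ofPred_eq, hv]
      linarith
    · simp
  · exact ⟨fun a b => by simp [sum_add_distrib], fun c a => by simp [mul_sum]⟩

theorem mul_sum_sub_one_le_of_mem_convexHull_insert_single (hs : 0 ≤ s) (hv : ∑ j, v j = s + 1)
    (hx : x ∈ convexHull ℝ (insert v (Set.range fun i => Pi.single i 1))) (i : ι) :
    v i * (∑ j, x j - 1) ≤ s * x i := by
  suffices -v i ≤ s * x i - v i * ∑ j, x j by linarith
  refine convexHull_min ?_
    (convex_halfSpace_ge (f := fun y : ι → ℝ => s * y i - v i * ∑ j, y j) ?_ (-v i)) hx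
  · rintro _ (rfl | ⟨k, rfl⟩)
    · simp only [Set.mem_ofPred_eq, hv]
      linarith
    · have : 0 ≤ s * Pi.single (M := fun _ => ℝ) k 1 i := by
        apply mul_nonneg hs
        by_cases h : i = k <;> simp [h]
      simp only [Set.mem_ofPred_eq, sum_pi_single', mem_univ, if_true]
      linarith
  · exact ⟨fun a b => by simp only [Pi.add_apply, sum_add_distrib]; ring,
      fun c a => by simp only [Pi.smul_apply, smul_eq_mul, ← mul_sum]; ring⟩

end FacetInequalities

/-- Here `(a + 100) / 101 = ⌈a / 101⌉`. -/
theorem add_one_lt_sum_ceil_div_of_pos_of_lt : ∀ n < 101, 0 < n →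
    n + 1 < (6 * n + 100) / 101 + (14 * n + 100) / 101 + (17 * n + 100) / 101 +
      (65 * n + 100) / 101 := by
  decide

theorem mem_vertices_of_facet_inequalities (z : Fin 4 → ℤ) (h1 : 1 ≤ ∑ j, z j)
    (h : ∀ i, ![6, 14, 17, 65] i * (∑ j, z j - 1) ≤ 101 * z i) :
    z ∈ ({![6, 14, 17, 65], ![1, 0, 0, 0], ![0, 1, 0, 0], ![0, 0, 1, 0], ![0, 0, 0, 1]} :
      Set (Fin 4 → ℤ)) := by
  obtain ⟨a, b, c, d, rfl⟩ : ∃ a b c d, z = ![a, b, c, d] :=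
    ⟨z 0, z 1, z 2, z 3, by ext i; fin_cases i <;> rfl⟩
  simp only [Fin.forall_fin_succ, Fin.sum_univ_four, Matrix.cons_val, Matrix.cons_val_succ,
    IsEmpty.forall_iff, and_true] at h h1
  simp only [Set.mem_insert_iff, Set.mem_singleton_iff, Matrix.vecCons_inj, and_true]
  obtain ⟨ha, hb, hc, hd⟩ := h
  obtain ⟨n, hn⟩ : ∃ n : ℕ, (n : ℤ) = a + b + c + d - 1 := ⟨_, Int.toNat_of_nonneg (by omega)⟩
  rw [← hn] at ha hb hc hd
  obtain rfl | rfl | ⟨hn0, hn101⟩ : n = 0 ∨ n = 101 ∨ (0 < n ∧ n < 101) := by omega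
  · omega
  · omega
  · have := add_one_lt_sum_ceil_div_of_pos_of_lt n hn101 hn0
    have : ((6 * n + 100) / 101 : ℕ) ≤ a := by omega
    have : ((14 * n + 100) / 101 : ℕ) ≤ b := by omega
    have : ((17 * n + 100) / 101 : ℕ) ≤ c := by omega
    have : ((65 * n + 100) / 101 : ℕ) ≤ d := by omega
    omega

theorem stmt_9 (V : Set (Fin 4 → ℝ))
    (hV : V = {![6, 14, 17, 65], ![1, 0, 0, 0], ![0, 1, 0, 0], ![0, 0, 1, 0], ![0, 0, 0, 1]})
    (Δ : Set (Fin 4 → ℝ)) (hΔ : Δ = convexHull ℝ V) :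
    ∀ z : Fin 4 → ℤ, (fun i => (z i : ℝ)) ∈ Δ → (fun i => (z i : ℝ)) ∈ V := by
  intro z hz
  set w : Fin 4 → ℤ := ![6, 14, 17, 65]
  have hV_sub : V ⊆ insert (fun i => (w i : ℝ)) (Set.range fun i => Pi.single i 1) := by
    rw [hV]
    simp only [Set.insert_subset_iff, Set.singleton_subset_iff]
    refine ⟨Or.inl ?_, Or.inr ⟨0, ?_⟩, Or.inr ⟨1, ?_⟩, Or.inr ⟨2, ?_⟩, Or.inr ⟨3, ?_⟩⟩ <;>
      ext i <;> fin_cases i <;> simp [w]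
  have hw : ∑ j, (w j : ℝ) = 101 + 1 := by
    rw [← Int.cast_sum, show ∑ j, w j = 102 from rfl]
    norm_num
  rw [hΔ] at hz
  replace hz := convexHull_mono hV_sub hz
  have hz_sum := one_le_sum_of_mem_convexHull_insert_single (by norm_num) hw hz
  have hz_facet := mul_sum_sub_one_le_of_mem_convexHull_insert_single (by norm_num) hw hz
  have hz_vertex := mem_vertices_of_facet_inequalities z (by exact_mod_cast hz_sum)
    fun i => by exact_mod_cast hz_facet i
  rw [hV]
  rcases hz_vertex with rfl | rfl | rfl | rfl | rfl <;> simp [funext_iff, Fin.forall_fin_succ]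
end

section
/- Let F be a field, let n ≥ 1, and let f, g ∈ F[x_1, …, x_n] with f ≠ 0, and suppose h = x_{n+1}·f + g is irreducible in F[x_1, …, x_{n+1}]. Then the fraction field of F[x_1, …, x_{n+1}]/(h) is isomorphic as an F-algebra to the rational function field F(x_1, …, x_n). -/
open Polynomial MvPolynomial in
/-- In the fraction field, a polynomial with root `-g/f` is divisible by `C f * X + C g`,
provided the latter is prime. -/
lemma aux_dvd {R : Type*} [CommRing R] [IsDomain R] (f g : R) (hf : f ≠ 0)
    (hp : Prime (Polynomial.C f * Polynomial.X + Polynomial.C g)) (P : Polynomial R)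
    (hP : Polynomial.aeval
      (algebraMap R (FractionRing R) (-g) / algebraMap R (FractionRing R) f) P = 0) :
    (Polynomial.C f * Polynomial.X + Polynomial.C g) ∣ P := by
  have inj : Function.Injective (algebraMap R (FractionRing R)) :=
    IsFractionRing.injective _ _
  have h1 : Polynomial.aeval (algebraMap R (FractionRing R) (-g)) (P.scaleRoots f) = 0 :=
    Polynomial.scaleRoots_aeval_eq_zero_of_aeval_div_eq_zero inj hP
      (mem_nonZeroDivisors_of_ne_zero hf)
  have h2 : (P.scaleRoots f).eval (-g) = 0 := by
    apply inj
    rw [map_zero, ← Polynomial.eval₂_at_apply, ← Polynomial.aeval_def, h1]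
  have h3 : (Polynomial.X - Polynomial.C (-g)) ∣ P.scaleRoots f :=
    Polynomial.dvd_iff_isRoot.mpr h2
  have h4 := map_dvd (Polynomial.eval₂RingHom Polynomial.C
    (Polynomial.C f * Polynomial.X)) h3
  have h5 : (Polynomial.eval₂RingHom Polynomial.C (Polynomial.C f * Polynomial.X))
      (Polynomial.X - Polynomial.C (-g)) = Polynomial.C f * Polynomial.X + Polynomial.C g := by
    simp [sub_neg_eq_add]
  have h6 : (Polynomial.eval₂RingHom Polynomial.C (Polynomial.C f * Polynomial.X))
      (P.scaleRoots f) = Polynomial.C f ^ P.natDegree * P := by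
    have := Polynomial.scaleRoots_eval₂_mul (Polynomial.C : R →+* Polynomial R)
      Polynomial.X f (p := P)
    simpa [Polynomial.eval₂_C_X] using this
  rw [h5, h6] at h4
  rcases hp.2.2 _ _ h4 with hc | hc
  · exfalso
    have hc' : (Polynomial.C f * Polynomial.X + Polynomial.C g) ∣ Polynomial.C f :=
      hp.dvd_of_dvd_pow (by simpa [map_pow] using hc)
    have hdeg := Polynomial.natDegree_le_of_dvd hc' (by simpa using hf)
    rw [Polynomial.natDegree_linear hf] at hdeg
    simp at hdeg
  · exact hc

open MvPolynomial in
lemma aux_rename_succ {F : Type} [Field F] {n : ℕ} (r : MvPolynomial (Fin n) F) :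
    MvPolynomial.finSuccEquiv F n (MvPolynomial.rename Fin.succ r) = Polynomial.C r := by
  induction r using MvPolynomial.induction_on with
  | C a => simp [MvPolynomial.finSuccEquiv_apply, MvPolynomial.eval₂Hom_C]
  | add p q hp hq => simp [map_add, hp, hq]
  | mul_X p i hp => simp [map_mul, hp, MvPolynomial.finSuccEquiv_X_succ]

set_option maxHeartbeats 2000000 in
set_option synthInstance.maxHeartbeats 400000 in
theorem stmt_10 (F : Type) [Field F] (n : ℕ) (hn : 1 ≤ n)
    (f g : MvPolynomial (Fin n) F) (hf : f ≠ 0)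
    (h : MvPolynomial (Fin (n + 1)) F)
    (hh : h = MvPolynomial.X (Fin.last n) * MvPolynomial.rename Fin.castSucc f
        + MvPolynomial.rename Fin.castSucc g)
    (hirr : Irreducible h) :
    Nonempty (FractionRing (MvPolynomial (Fin (n + 1)) F ⧸ Ideal.span {h})
      ≃ₐ[F] FractionRing (MvPolynomial (Fin n) F)) := by
  classical
  -- the equivalence moving the last variable to position 0
  let E : MvPolynomial (Fin (n + 1)) F ≃ₐ[F] Polynomial (MvPolynomial (Fin n) F) :=
    (MvPolynomial.renameEquiv F (finRotate (n + 1))).trans (MvPolynomial.finSuccEquiv F n)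
  have hEcast : ∀ r : MvPolynomial (Fin n) F,
      E (MvPolynomial.rename Fin.castSucc r) = Polynomial.C r := by
    intro r
    show MvPolynomial.finSuccEquiv F n
      (MvPolynomial.rename (finRotate (n+1)) (MvPolynomial.rename Fin.castSucc r)) = _
    rw [MvPolynomial.rename_rename]
    have hcomp : (⇑(finRotate (n+1))) ∘ (Fin.castSucc : Fin n → Fin (n+1)) = Fin.succ := by
      funext i
      simp [finRotate_succ_apply, Fin.coeSucc_eq_succ]
    rw [hcomp, aux_rename_succ]
  have hEh : E h = Polynomial.C f * Polynomial.X + Polynomial.C g := by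
    rw [hh]
    show MvPolynomial.finSuccEquiv F n (MvPolynomial.rename (finRotate (n+1)) _) = _
    rw [map_add, map_mul, MvPolynomial.rename_X, finRotate_last]
    have h0 : MvPolynomial.finSuccEquiv F n (MvPolynomial.X (0 : Fin (n+1))) = Polynomial.X :=
      MvPolynomial.finSuccEquiv_X_zero
    rw [map_add, map_mul, h0]
    have e1 : (MvPolynomial.finSuccEquiv F n)
        (MvPolynomial.rename (finRotate (n+1)) (MvPolynomial.rename Fin.castSucc f))
        = Polynomial.C f := hEcast f
    have e2 : (MvPolynomial.finSuccEquiv F n)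
        (MvPolynomial.rename (finRotate (n+1)) (MvPolynomial.rename Fin.castSucc g))
        = Polynomial.C g := hEcast g
    rw [e1, e2]; ring
  have hprime : Prime h := hirr.prime
  have hEprime : Prime (Polynomial.C f * Polynomial.X + Polynomial.C g) := by
    rw [← hEh]
    exact (MulEquiv.prime_iff E.toMulEquiv).mpr hprime
  -- the evaluation map
  let K := FractionRing (MvPolynomial (Fin n) F)
  let t : K := algebraMap (MvPolynomial (Fin n) F) K (-g) /
    algebraMap (MvPolynomial (Fin n) F) K f
  have inj : Function.Injective (algebraMap (MvPolynomial (Fin n) F) K) :=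
    IsFractionRing.injective _ _
  have hfK : algebraMap (MvPolynomial (Fin n) F) K f ≠ 0 := fun h0 => hf (inj (by simpa using h0))
  let φ : MvPolynomial (Fin (n + 1)) F →ₐ[F] K :=
    ((Polynomial.aeval t).restrictScalars F).comp E.toAlgHom
  have hφcast : ∀ r : MvPolynomial (Fin n) F,
      φ (MvPolynomial.rename Fin.castSucc r) = algebraMap (MvPolynomial (Fin n) F) K r := by
    intro r
    show (Polynomial.aeval t) (E (MvPolynomial.rename Fin.castSucc r)) = _
    rw [hEcast r, Polynomial.aeval_C]
  have hφh : φ h = 0 := by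
    show (Polynomial.aeval t) (E h) = 0
    rw [hEh]
    simp only [map_add, map_mul, Polynomial.aeval_C, Polynomial.aeval_X]
    show algebraMap _ K f * t + algebraMap _ K g = 0
    rw [show t = algebraMap (MvPolynomial (Fin n) F) K (-g) /
      algebraMap (MvPolynomial (Fin n) F) K f from rfl]
    rw [mul_div_cancel₀ _ hfK, map_neg]
    ring
  have hker : ∀ a : MvPolynomial (Fin (n + 1)) F, φ a = 0 → a ∈ Ideal.span {h} := by
    intro a ha
    have haP : Polynomial.aeval t (E a) = 0 := ha
    have hdvd : (Polynomial.C f * Polynomial.X + Polynomial.C g) ∣ E a :=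
      aux_dvd f g hf hEprime (E a) haP
    rw [← hEh] at hdvd
    have : h ∣ a := by
      have := map_dvd E.symm hdvd
      simpa using this
    exact Ideal.mem_span_singleton.mpr this
  -- h ≠ 0, span is prime
  have hne : h ≠ 0 := hprime.ne_zero
  haveI hspanprime : (Ideal.span {h}).IsPrime :=
    (Ideal.span_singleton_prime hne).mpr hprime
  -- the induced map on the quotient
  let A := MvPolynomial (Fin (n + 1)) F ⧸ Ideal.span {h}
  haveI : IsDomain A := Ideal.Quotient.isDomain (Ideal.span {h})
  let ψ : A →ₐ[F] K := Ideal.Quotient.liftₐ (Ideal.span {h}) φ (by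
    intro a ha
    rw [Ideal.mem_span_singleton] at ha
    obtain ⟨c, rfl⟩ := ha
    rw [map_mul, hφh, zero_mul])
  have hψmk : ∀ a : MvPolynomial (Fin (n + 1)) F, ψ (Ideal.Quotient.mk _ a) = φ a := by
    intro a; rfl
  have hψinj : Function.Injective ψ := by
    rw [injective_iff_map_eq_zero]
    intro x hx
    obtain ⟨a, rfl⟩ := Ideal.Quotient.mk_surjective x
    rw [hψmk] at hx
    exact (Ideal.Quotient.eq_zero_iff_mem).mpr (hker a hx)
  -- lift to the fraction field
  let Φ : FractionRing A →ₐ[F] K := IsFractionRing.liftAlgHom hψinj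
  have hΦcomp : ∀ a : A, Φ (algebraMap A (FractionRing A) a) = ψ a := by
    intro a
    rw [IsFractionRing.liftAlgHom_apply]
    exact IsFractionRing.lift_algebraMap hψinj a
  have hΦinj : Function.Injective Φ := by
    exact Φ.toRingHom.injective
  have hΦsurj : Function.Surjective Φ := by
    intro z
    obtain ⟨a, b, hb, rfl⟩ := IsFractionRing.div_surjective (A := MvPolynomial (Fin n) F) z
    refine ⟨algebraMap A (FractionRing A) (Ideal.Quotient.mk _ (MvPolynomial.rename Fin.castSucc a))
      / algebraMap A (FractionRing A) (Ideal.Quotient.mk _ (MvPolynomial.rename Fin.castSucc b)), ?_⟩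
    rw [map_div₀, hΦcomp, hΦcomp, hψmk, hψmk, hφcast, hφcast]
  exact ⟨AlgEquiv.ofBijective Φ ⟨hΦinj, hΦsurj⟩⟩
end

section
/- Let M be the commutative monoid generated by elements e_0, e_{1,1}, …, e_{1,a_1}, …, e_{r,1}, …, e_{r,a_r} subject to the relations e_0 = e_{i,1} + … + e_{i,a_i} for i = 1, …, r, where a_1, …, a_r are positive integers. Then M is cancellative (it embeds in its Grothendieck group) and sharp (the only invertible element of M is 0). -/
/-- Generators of the monoid: `none` is `e₀`, `some ⟨i,j⟩` is `e_{i,j}`. -/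
abbrev ToroidalGen (r : ℕ) (a : Fin r → ℕ) : Type := Option ((i : Fin r) × Fin (a i))

/-- The relations `e₀ = e_{i,1} + ⋯ + e_{i,aᵢ}` on the free commutative monoid. -/
def toroidalRel (r : ℕ) (a : Fin r → ℕ) :
    (ToroidalGen r a →₀ ℕ) → (ToroidalGen r a →₀ ℕ) → Prop := fun x y =>
  ∃ i : Fin r, x = Finsupp.single (none : ToroidalGen r a) 1 ∧
    y = ∑ j : Fin (a i), Finsupp.single (some ⟨i, j⟩ : ToroidalGen r a) 1

/-- The monoid `M` presented by the generators and relations. -/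
abbrev ToroidalMonoid (r : ℕ) (a : Fin r → ℕ) : Type :=
  (addConGen (toroidalRel r a)).Quotient

namespace Toro

variable {r : ℕ} {a : Fin r → ℕ}

/-- min over row `i` -/
def NN (ha : ∀ i, 1 ≤ a i) (x : ToroidalGen r a →₀ ℕ) (i : Fin r) : ℕ :=
  Finset.univ.inf' ⟨⟨0, ha i⟩, Finset.mem_univ _⟩ fun j => x (some ⟨i, j⟩)

lemma NN_le (ha : ∀ i, 1 ≤ a i) (x : ToroidalGen r a →₀ ℕ) {i : Fin r} (j : Fin (a i)) :
    NN ha x i ≤ x (some ⟨i, j⟩) :=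
  Finset.inf'_le _ (Finset.mem_univ j)

lemma exists_NN (ha : ∀ i, 1 ≤ a i) (x : ToroidalGen r a →₀ ℕ) (i : Fin r) :
    ∃ j : Fin (a i), x (some ⟨i, j⟩) = NN ha x i := by
  obtain ⟨j, _, h⟩ := Finset.exists_mem_eq_inf'
    (⟨⟨0, ha i⟩, Finset.mem_univ _⟩ : (Finset.univ : Finset (Fin (a i))).Nonempty)
    (fun j => x (some ⟨i, j⟩))
  exact ⟨j, h.symm⟩

def RR (ha : ∀ i, 1 ≤ a i) (x : ToroidalGen r a →₀ ℕ) (s : (i : Fin r) × Fin (a i)) : ℕ :=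
  x (some s) - NN ha x s.1

lemma RR_add_NN (ha : ∀ i, 1 ≤ a i) (x : ToroidalGen r a →₀ ℕ) (s : (i : Fin r) × Fin (a i)) :
    RR ha x s + NN ha x s.1 = x (some s) :=
  tsub_add_cancel_of_le (NN_le ha x s.2)

lemma le_NN (ha : ∀ i, 1 ≤ a i) (x : ToroidalGen r a →₀ ℕ) {i : Fin r} {c : ℕ}
    (h : ∀ j : Fin (a i), c ≤ x (some ⟨i, j⟩)) : c ≤ NN ha x i :=
  Finset.le_inf' _ _ fun j _ => h j

lemma RR_add_NN' (ha : ∀ i, 1 ≤ a i) (x : ToroidalGen r a →₀ ℕ) (i : Fin r) (j : Fin (a i)) :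
    RR ha x ⟨i, j⟩ + NN ha x i = x (some ⟨i, j⟩) :=
  RR_add_NN ha x ⟨i, j⟩

def QQ (ha : ∀ i, 1 ≤ a i) (f : ((i : Fin r) × Fin (a i)) → ℕ) (z : ToroidalGen r a →₀ ℕ)
    (i : Fin r) : ℕ :=
  Finset.univ.inf' ⟨⟨0, ha i⟩, Finset.mem_univ _⟩ fun j => f ⟨i, j⟩ + z (some ⟨i, j⟩)

lemma QQ_le (ha : ∀ i, 1 ≤ a i) (f : ((i : Fin r) × Fin (a i)) → ℕ) (z : ToroidalGen r a →₀ ℕ)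
    {i : Fin r} (j : Fin (a i)) : QQ ha f z i ≤ f ⟨i, j⟩ + z (some ⟨i, j⟩) :=
  Finset.inf'_le _ (Finset.mem_univ j)

lemma le_QQ (ha : ∀ i, 1 ≤ a i) (f : ((i : Fin r) × Fin (a i)) → ℕ) (z : ToroidalGen r a →₀ ℕ)
    {i : Fin r} {c : ℕ} (h : ∀ j : Fin (a i), c ≤ f ⟨i, j⟩ + z (some ⟨i, j⟩)) :
    c ≤ QQ ha f z i :=
  Finset.le_inf' _ _ fun j _ => h j

lemma exists_QQ (ha : ∀ i, 1 ≤ a i) (f : ((i : Fin r) × Fin (a i)) → ℕ)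
    (z : ToroidalGen r a →₀ ℕ) (i : Fin r) :
    ∃ j : Fin (a i), f ⟨i, j⟩ + z (some ⟨i, j⟩) = QQ ha f z i := by
  obtain ⟨j, _, h⟩ := Finset.exists_mem_eq_inf'
    (⟨⟨0, ha i⟩, Finset.mem_univ _⟩ : (Finset.univ : Finset (Fin (a i))).Nonempty)
    (fun j => f ⟨i, j⟩ + z (some ⟨i, j⟩))
  exact ⟨j, h.symm⟩

lemma NN_add (ha : ∀ i, 1 ≤ a i) (x z : ToroidalGen r a →₀ ℕ) (i : Fin r) :
    NN ha (x + z) i = QQ ha (RR ha x) z i + NN ha x i := by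
  have hxz : ∀ j : Fin (a i), (x + z) (some ⟨i, j⟩)
      = (RR ha x ⟨i, j⟩ + z (some ⟨i, j⟩)) + NN ha x i := by
    intro j
    have h1 := RR_add_NN' ha x i j
    have h2 : (x + z) (some ⟨i, j⟩) = x (some ⟨i, j⟩) + z (some ⟨i, j⟩) :=
      Finsupp.add_apply ..
    omega
  apply le_antisymm
  · obtain ⟨j, hj⟩ := exists_QQ ha (RR ha x) z i
    calc NN ha (x + z) i ≤ (x + z) (some ⟨i, j⟩) := NN_le ha _ j
      _ = (RR ha x ⟨i, j⟩ + z (some ⟨i, j⟩)) + NN ha x i := hxz j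
      _ = QQ ha (RR ha x) z i + NN ha x i := by rw [hj]
  · apply le_NN
    intro j
    have := QQ_le ha (RR ha x) z j
    have := hxz j
    omega

lemma RR_add (ha : ∀ i, 1 ≤ a i) (x z : ToroidalGen r a →₀ ℕ) (i : Fin r) (j : Fin (a i)) :
    RR ha (x + z) ⟨i, j⟩ + QQ ha (RR ha x) z i = RR ha x ⟨i, j⟩ + z (some ⟨i, j⟩) := by
  have h1 := RR_add_NN' ha (x + z) i j
  have h2 := RR_add_NN' ha x i j
  have h3 := NN_add ha x z i
  have h4 : (x + z) (some ⟨i, j⟩) = x (some ⟨i, j⟩) + z (some ⟨i, j⟩) := Finsupp.add_apply ..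
  omega

def Psi1 (ha : ∀ i, 1 ≤ a i) (x : ToroidalGen r a →₀ ℕ) : ℕ :=
  x none + ∑ i, NN ha x i

lemma Psi1_add (ha : ∀ i, 1 ≤ a i) (x z : ToroidalGen r a →₀ ℕ) :
    Psi1 ha (x + z) = Psi1 ha x + (z none + ∑ i, QQ ha (RR ha x) z i) := by
  unfold Psi1
  have h0 : (x + z) none = x none + z none := Finsupp.add_apply ..
  have h1 : ∑ i, NN ha (x + z) i = ∑ i, (QQ ha (RR ha x) z i + NN ha x i) :=
    Finset.sum_congr rfl fun i _ => NN_add ha x z i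
  rw [h0, h1, Finset.sum_add_distrib]
  ring

/-- one row of the relation -/
noncomputable def rowSum (i : Fin r) : ToroidalGen r a →₀ ℕ :=
  ∑ j : Fin (a i), Finsupp.single (some ⟨i, j⟩ : ToroidalGen r a) 1

lemma rowSum_apply_none (i : Fin r) : (rowSum i : ToroidalGen r a →₀ ℕ) none = 0 := by
  rw [rowSum, Finsupp.finset_sum_apply]
  exact Finset.sum_eq_zero fun j _ => Finsupp.single_eq_of_ne (by simp)

lemma rowSum_apply_some (i i' : Fin r) (j' : Fin (a i')) :
    (rowSum i : ToroidalGen r a →₀ ℕ) (some ⟨i', j'⟩) = if i = i' then 1 else 0 := by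
  rw [rowSum, Finsupp.finset_sum_apply]
  rcases eq_or_ne i i' with h | h
  · subst h
    rw [if_pos rfl]
    rw [Finset.sum_eq_single j']
    · exact Finsupp.single_eq_same
    · intro j _ hj
      refine Finsupp.single_eq_of_ne' fun hc => hj ?_
      simpa using hc
    · exact fun h => absurd (Finset.mem_univ j') h
  · rw [if_neg h]
    refine Finset.sum_eq_zero fun j _ => Finsupp.single_eq_of_ne' ?_
    intro hcon
    apply h
    have : (⟨i, j⟩ : (i : Fin r) × Fin (a i)) = ⟨i', j'⟩ := by
      simpa using hcon
    exact congrArg Sigma.fst this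

lemma NN_rowSum (ha : ∀ i, 1 ≤ a i) (i i' : Fin r) :
    NN ha (rowSum i) i' = if i = i' then 1 else 0 := by
  apply le_antisymm
  · calc NN ha (rowSum i) i' ≤ (rowSum i : ToroidalGen r a →₀ ℕ) (some ⟨i', ⟨0, ha i'⟩⟩) :=
        NN_le ha _ _
      _ = _ := rowSum_apply_some i i' _
  · apply le_NN
    intro j
    rw [rowSum_apply_some]

lemma RR_rowSum (ha : ∀ i, 1 ≤ a i) (i : Fin r) (s : (i : Fin r) × Fin (a i)) :
    RR ha (rowSum i) s = 0 := by
  obtain ⟨i', j'⟩ := s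
  show (rowSum i : ToroidalGen r a →₀ ℕ) (some ⟨i', j'⟩) - NN ha (rowSum i) i' = 0
  rw [rowSum_apply_some, NN_rowSum]
  simp

lemma Psi1_rowSum (ha : ∀ i, 1 ≤ a i) (i : Fin r) : Psi1 ha (rowSum i) = 1 := by
  unfold Psi1
  rw [rowSum_apply_none]
  have : ∑ i', NN ha (rowSum i : ToroidalGen r a →₀ ℕ) i'
      = ∑ i', if i = i' then 1 else 0 :=
    Finset.sum_congr rfl fun i' _ => NN_rowSum ha i i'
  rw [this]
  simp

lemma NN_e0 (ha : ∀ i, 1 ≤ a i) (i : Fin r) :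
    NN ha (Finsupp.single (none : ToroidalGen r a) 1) i = 0 := by
  apply Nat.le_antisymm _ (Nat.zero_le _)
  calc NN ha _ i ≤ (Finsupp.single (none : ToroidalGen r a) 1) (some ⟨i, ⟨0, ha i⟩⟩) :=
      NN_le ha _ _
    _ = 0 := Finsupp.single_eq_of_ne (by simp)

lemma RR_e0 (ha : ∀ i, 1 ≤ a i) (s : (i : Fin r) × Fin (a i)) :
    RR ha (Finsupp.single (none : ToroidalGen r a) 1) s = 0 := by
  show (Finsupp.single (none : ToroidalGen r a) 1) (some s) - _ = 0
  rw [Finsupp.single_eq_of_ne (by simp), NN_e0]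
  rfl

lemma Psi1_e0 (ha : ∀ i, 1 ≤ a i) :
    Psi1 ha (Finsupp.single (none : ToroidalGen r a) 1) = 1 := by
  unfold Psi1
  rw [Finsupp.single_eq_same]
  simp [NN_e0]

/-- The kernel congruence of `Psi`. -/
lemma psiKer_addRight (ha : ∀ i, 1 ≤ a i) {x y : ToroidalGen r a →₀ ℕ}
    (z : ToroidalGen r a →₀ ℕ)
    (h1 : Psi1 ha x = Psi1 ha y) (h2 : RR ha x = RR ha y) :
    Psi1 ha (x + z) = Psi1 ha (y + z) ∧ RR ha (x + z) = RR ha (y + z) := by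
  constructor
  · rw [Psi1_add, Psi1_add, h1, h2]
  · funext s
    obtain ⟨i, j⟩ := s
    have hx := RR_add ha x z i j
    have hy := RR_add ha y z i j
    rw [h2] at hx
    omega

lemma psiKer_add (ha : ∀ i, 1 ≤ a i) {w x y z : ToroidalGen r a →₀ ℕ}
    (hwx : Psi1 ha w = Psi1 ha x ∧ RR ha w = RR ha x)
    (hyz : Psi1 ha y = Psi1 ha z ∧ RR ha y = RR ha z) :
    Psi1 ha (w + y) = Psi1 ha (x + z) ∧ RR ha (w + y) = RR ha (x + z) := by
  have h1 := psiKer_addRight ha y hwx.1 hwx.2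
  have h2 := psiKer_addRight ha x hyz.1 hyz.2
  rw [add_comm y x, add_comm z x] at h2
  exact ⟨h1.1.trans h2.1, h1.2.trans h2.2⟩

def PsiCon (ha : ∀ i, 1 ≤ a i) : AddCon (ToroidalGen r a →₀ ℕ) where
  r x y := Psi1 ha x = Psi1 ha y ∧ RR ha x = RR ha y
  iseqv := ⟨fun _ => ⟨rfl, rfl⟩, fun h => ⟨h.1.symm, h.2.symm⟩,
    fun h h' => ⟨h.1.trans h'.1, h.2.trans h'.2⟩⟩
  add' := psiKer_add ha

lemma con_psi (ha : ∀ i, 1 ≤ a i) {x y : ToroidalGen r a →₀ ℕ}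
    (h : addConGen (toroidalRel r a) x y) :
    Psi1 ha x = Psi1 ha y ∧ RR ha x = RR ha y := by
  refine (AddCon.addConGen_le (c := PsiCon ha)).mpr ?_ h
  rintro x y ⟨i, hx, hy⟩
  subst hx hy
  have hrow : (∑ j : Fin (a i), Finsupp.single (some ⟨i, j⟩ : ToroidalGen r a) 1)
      = rowSum i := rfl
  rw [hrow]
  constructor
  · rw [Psi1_e0 ha, Psi1_rowSum ha i]
  · funext s
    rw [RR_e0 ha s, RR_rowSum ha i s]

/-- Normal form attached to the invariant data. -/
noncomputable def nfp (c : ℕ) (f : ((i : Fin r) × Fin (a i)) → ℕ) : ToroidalGen r a →₀ ℕ :=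
  Finsupp.single none c + ∑ s : (i : Fin r) × Fin (a i), Finsupp.single (some s) (f s)

lemma nfp_apply_none (c : ℕ) (f : ((i : Fin r) × Fin (a i)) → ℕ) :
    (nfp c f : ToroidalGen r a →₀ ℕ) none = c := by
  rw [nfp, Finsupp.add_apply, Finsupp.single_eq_same, Finsupp.finset_sum_apply]
  rw [Finset.sum_eq_zero fun s _ => Finsupp.single_eq_of_ne (by simp)]
  omega

lemma nfp_apply_some (c : ℕ) (f : ((i : Fin r) × Fin (a i)) → ℕ)
    (s : (i : Fin r) × Fin (a i)) : (nfp c f : ToroidalGen r a →₀ ℕ) (some s) = f s := by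
  rw [nfp, Finsupp.add_apply, Finsupp.single_eq_of_ne (by simp), Finsupp.finset_sum_apply]
  rw [Finset.sum_eq_single s]
  · simp [Finsupp.single_eq_same]
  · intro t _ hts
    exact Finsupp.single_eq_of_ne' (by simpa using hts)
  · exact fun h => absurd (Finset.mem_univ s) h

lemma equiv_nf (ha : ∀ i, 1 ≤ a i) (x : ToroidalGen r a →₀ ℕ) :
    addConGen (toroidalRel r a) x (nfp (Psi1 ha x) (RR ha x)) := by
  suffices H : ∀ n (x : ToroidalGen r a →₀ ℕ), (∑ i, NN ha x i) = n →
      addConGen (toroidalRel r a) x (nfp (Psi1 ha x) (RR ha x)) from H _ x rfl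
  intro n
  induction n using Nat.strong_induction_on with
  | _ n IH =>
    intro x hx
    rcases Nat.eq_zero_or_pos n with hn | hn
    · -- all row minima vanish: x is already in normal form
      subst hn
      have hNN : ∀ i, NN ha x i = 0 := by
        intro i
        have := Finset.sum_eq_zero_iff.mp hx i (Finset.mem_univ i)
        exact this
      have : x = nfp (Psi1 ha x) (RR ha x) := by
        ext g
        match g with
        | none =>
          rw [nfp_apply_none]
          unfold Psi1
          rw [hx]
          omega
        | some s =>
          rw [nfp_apply_some]
          show x (some s) = x (some s) - NN ha x s.1
          rw [hNN]
          omega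
      exact this ▸ AddConGen.Rel.refl x
    · -- some row minimum is positive: absorb that row into e₀
      have hex : ∃ i, 0 < NN ha x i := by
        by_contra hcon
        push_neg at hcon
        simp only [Nat.le_zero] at hcon
        rw [Finset.sum_eq_zero fun i _ => hcon i] at hx
        omega
      obtain ⟨i, hi⟩ := hex
      set w : ToroidalGen r a →₀ ℕ := x - rowSum i with hw
      have hle : rowSum i ≤ x := by
        rw [Finsupp.le_iff]
        intro g _
        match g with
        | none => rw [rowSum_apply_none]; exact Nat.zero_le _
        | some ⟨i', j'⟩ =>
          rw [rowSum_apply_some]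
          rcases eq_or_ne i i' with h | h
          · subst h
            rw [if_pos rfl]
            exact le_trans hi (NN_le ha x j')
          · rw [if_neg h]; exact Nat.zero_le _
      have hxw : x = w + rowSum i := (tsub_add_cancel_of_le hle).symm
      set x₂ : ToroidalGen r a →₀ ℕ := w + Finsupp.single none 1 with hx₂
      have hstep : addConGen (toroidalRel r a) x x₂ := by
        rw [hxw]
        exact AddConGen.Rel.add (AddConGen.Rel.refl w)
          (AddConGen.Rel.symm (AddConGen.Rel.of _ _ ⟨i, rfl, rfl⟩))
      have hpsi := con_psi ha hstep
      -- the measure decreases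
      have hx₂val : ∀ (i' : Fin r) (j : Fin (a i')),
          x₂ (some ⟨i', j⟩) + (if i = i' then 1 else 0) = x (some ⟨i', j⟩) := by
        intro i' j
        have h1 : x₂ (some ⟨i', j⟩) = w (some ⟨i', j⟩) + 0 := by
          rw [hx₂, Finsupp.add_apply, Finsupp.single_eq_of_ne (by simp)]
        have h2 : w (some ⟨i', j⟩) = x (some ⟨i', j⟩) - rowSum i (some ⟨i', j⟩) := by
          rw [hw, Finsupp.tsub_apply]
        have h3 := rowSum_apply_some i i' j
        have h4 : rowSum i (some ⟨i', j⟩) ≤ x (some ⟨i', j⟩) := by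
          rw [Finsupp.le_iff] at hle
          by_cases hg : some ⟨i', j⟩ ∈ (rowSum i : ToroidalGen r a →₀ ℕ).support
          · exact hle _ hg
          · rw [Finsupp.notMem_support_iff.mp hg]; exact Nat.zero_le _
        rcases eq_or_ne i i' with h | h
        · subst h
          rw [if_pos rfl]
          rw [if_pos rfl] at h3
          omega
        · rw [if_neg h]
          rw [if_neg h] at h3
          omega
      have hNN₂ : ∀ i' : Fin r, NN ha x₂ i' + (if i = i' then 1 else 0) = NN ha x i' := by
        intro i'
        rcases eq_or_ne i i' with h | h
        · subst h
          rw [if_pos rfl]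
          apply le_antisymm
          · obtain ⟨j, hj⟩ := exists_NN ha x i
            have h6 := hx₂val i j
            rw [if_pos rfl] at h6
            have h5 : NN ha x₂ i ≤ x₂ (some ⟨i, j⟩) := NN_le ha x₂ j
            omega
          · have : NN ha x i - 1 ≤ NN ha x₂ i := by
              apply le_NN
              intro j
              have h6 := hx₂val i j
              rw [if_pos rfl] at h6
              have := NN_le ha x j
              omega
            omega
        · rw [if_neg h]
          rw [Nat.add_zero]
          apply le_antisymm
          · obtain ⟨j, hj⟩ := exists_NN ha x i'
            have := hx₂val i' j
            rw [if_neg h] at this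
            have h5 : NN ha x₂ i' ≤ x₂ (some ⟨i', j⟩) := NN_le ha x₂ j
            omega
          · apply le_NN
            intro j
            have := hx₂val i' j
            rw [if_neg h] at this
            have := NN_le ha x j
            omega
      have hsum : (∑ i', NN ha x₂ i') + 1 = n := by
        have h1 : ∑ i', NN ha x i' = ∑ i', (NN ha x₂ i' + if i = i' then 1 else 0) :=
          Finset.sum_congr rfl fun i' _ => (hNN₂ i').symm
        rw [Finset.sum_add_distrib] at h1
        simp only [Finset.sum_ite_eq, Finset.mem_univ, if_true] at h1
        omega
      have hlt : (∑ i', NN ha x₂ i') < n := by omega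
      have hIH := IH _ hlt x₂ rfl
      rw [← hpsi.1, ← hpsi.2] at hIH
      exact AddConGen.Rel.trans hstep hIH

lemma psi_con (ha : ∀ i, 1 ≤ a i) {x y : ToroidalGen r a →₀ ℕ}
    (h1 : Psi1 ha x = Psi1 ha y) (h2 : RR ha x = RR ha y) :
    addConGen (toroidalRel r a) x y := by
  have hx := equiv_nf ha x
  have hy := equiv_nf ha y
  rw [h1, h2] at hx
  exact AddConGen.Rel.trans hx (AddConGen.Rel.symm hy)

lemma exists_RR_zero (ha : ∀ i, 1 ≤ a i) (x : ToroidalGen r a →₀ ℕ) (i : Fin r) :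
    ∃ j : Fin (a i), RR ha x ⟨i, j⟩ = 0 := by
  obtain ⟨j, hj⟩ := exists_NN ha x i
  refine ⟨j, ?_⟩
  show x (some ⟨i, j⟩) - NN ha x i = 0
  omega

lemma psi_cancel (ha : ∀ i, 1 ≤ a i) {x y z : ToroidalGen r a →₀ ℕ}
    (h1 : Psi1 ha (x + z) = Psi1 ha (y + z)) (h2 : RR ha (x + z) = RR ha (y + z)) :
    Psi1 ha x = Psi1 ha y ∧ RR ha x = RR ha y := by
  have hQ : ∀ i, QQ ha (RR ha x) z i = QQ ha (RR ha y) z i := by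
    intro i
    obtain ⟨j0, hj0⟩ := exists_RR_zero ha y i
    obtain ⟨j1, hj1⟩ := exists_RR_zero ha x i
    have e1 := RR_add ha x z i j0
    have e2 := RR_add ha y z i j0
    have e3 := RR_add ha x z i j1
    have e4 := RR_add ha y z i j1
    have g0 : RR ha (x + z) ⟨i, j0⟩ = RR ha (y + z) ⟨i, j0⟩ := congrFun h2 _
    have g1 : RR ha (x + z) ⟨i, j1⟩ = RR ha (y + z) ⟨i, j1⟩ := congrFun h2 _
    omega
  have hRR : RR ha x = RR ha y := by
    funext s
    obtain ⟨i, j⟩ := s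
    have e1 := RR_add ha x z i j
    have e2 := RR_add ha y z i j
    have g : RR ha (x + z) ⟨i, j⟩ = RR ha (y + z) ⟨i, j⟩ := congrFun h2 _
    have := hQ i
    omega
  refine ⟨?_, hRR⟩
  have e1 := Psi1_add ha x z
  have e2 := Psi1_add ha y z
  have hQs : ∑ i, QQ ha (RR ha x) z i = ∑ i, QQ ha (RR ha y) z i :=
    Finset.sum_congr rfl fun i _ => hQ i
  omega

lemma NN_zero (ha : ∀ i, 1 ≤ a i) (i : Fin r) : NN ha (0 : ToroidalGen r a →₀ ℕ) i = 0 := by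
  apply Nat.le_antisymm _ (Nat.zero_le _)
  calc NN ha 0 i ≤ (0 : ToroidalGen r a →₀ ℕ) (some ⟨i, ⟨0, ha i⟩⟩) := NN_le ha _ _
    _ = 0 := rfl

end Toro

open Toro in
theorem stmt_17 (r : ℕ) (hr : 1 ≤ r) (a : Fin r → ℕ) (ha : ∀ i, 1 ≤ a i) :
    (∀ x y z : ToroidalMonoid r a, x + z = y + z → x = y) ∧
    (∀ x y : ToroidalMonoid r a, x + y = 0 → x = 0 ∧ y = 0) := by
  constructor
  · intro x y z
    refine AddCon.induction_on₂ x y ?_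
    intro x y
    refine AddCon.induction_on z ?_
    intro z h
    rw [← AddCon.coe_add, ← AddCon.coe_add, AddCon.eq] at h
    have hpsi := con_psi ha h
    obtain ⟨h1, h2⟩ := psi_cancel ha hpsi.1 hpsi.2
    exact (AddCon.eq _).mpr (psi_con ha h1 h2)
  · intro x y
    refine AddCon.induction_on₂ x y ?_
    intro x y h
    have h0 : ((0 : ToroidalGen r a →₀ ℕ) : ToroidalMonoid r a) = 0 := rfl
    rw [← AddCon.coe_add, ← h0, AddCon.eq] at h
    have hpsi := con_psi ha h
    have hnone : (x + y) none = 0 ∧ ∀ i, NN ha (x + y) i = 0 := by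
      have := hpsi.1
      unfold Psi1 at this
      have hz : ∑ i, NN ha (0 : ToroidalGen r a →₀ ℕ) i = 0 :=
        Finset.sum_eq_zero fun i _ => NN_zero ha i
      have hzz : (0 : ToroidalGen r a →₀ ℕ) none = 0 := rfl
      rw [hz, hzz] at this
      constructor
      · omega
      · intro i
        have hle : NN ha (x + y) i ≤ ∑ i', NN ha (x + y) i' :=
          Finset.single_le_sum (fun i' _ => Nat.zero_le _) (Finset.mem_univ i)
        omega
    have hxy : x + y = 0 := by
      ext g
      match g with
      | none => exact hnone.1
      | some s =>
        have := congrFun hpsi.2 s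
        show (x + y) (some s) = 0
        have h5 : RR ha (x + y) s = (x + y) (some s) - NN ha (x + y) s.1 := rfl
        have h6 : RR ha (0 : ToroidalGen r a →₀ ℕ) s
            = (0 : ToroidalGen r a →₀ ℕ) (some s) - NN ha 0 s.1 := rfl
        have h7 := NN_zero ha s.1
        have h8 := hnone.2 s.1
        have h9 : (0 : ToroidalGen r a →₀ ℕ) (some s) = 0 := rfl
        omega
    have hx : x = 0 ∧ y = 0 := by
      constructor <;> ext g <;>
      · have h10 : x g + y g = 0 := by
          rw [← Finsupp.add_apply, hxy]; rfl
        have h11 : (0 : ToroidalGen r a →₀ ℕ) g = 0 := rfl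
        omega
    constructor
    · rw [hx.1]; rfl
    · rw [hx.2]; rfl
end
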